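/- Let n ≥ 1. Then H(H(pr_1))(𝒜_n) = H(η_{K_n})(e_{K_n}(β)) and H(H(pr_2))(𝒜_n) = η_{H(K_n)}(e_{K_n}(β)), as elements of H(H(K_n)). -/

import Mathlib

/-! Both sides are images of step functions under `e`, because `e` is natural:
`R_f (e_X α) = e_Y (f ∘ α)`, which holds definitionally for `reindex` and `eHM`.
So it suffices to compare the step functions pointwise. Since `pr₁ ∘ α_i` is the
constant `i`, `H(pr₁) ∘ A_n = η ∘ β`; since `pr₂ ∘ α_i = β` for every `i`,
`H(pr₂) ∘ A_n` is the constant `e(β)`. -/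

open scoped Topology

/-- The index set `S(X)`: triples `(φ, a, b)` with `φ : X → ℝ` continuous and
`0 ≤ a < b ≤ 1`. -/
structure SIdx (X : Type u) [TopologicalSpace X] : Type u where
  φ : C(X, ℝ)
  a : ℝ
  b : ℝ
  ha : 0 ≤ a
  hab : a < b
  hb : b ≤ 1

/-- `α : ℝ → X` is a step function on `[0,1)`: there is a partition
`0 = t 0 < t 1 < ⋯ < t k = 1` with `α` constant on each `[t j, t (j+1))`. -/
def IsStep {X : Type u} (α : ℝ → X) : Prop :=
  ∃ (k : ℕ) (t : ℕ → ℝ), 1 ≤ k ∧ t 0 = 0 ∧ t k = 1 ∧ (∀ j < k, t j < t (j + 1)) ∧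
    ∀ j < k, ∀ s ∈ Set.Ico (t j) (t (j + 1)), α s = α (t j)

/-- The embedding `e_X`, sending `α` to the point of `∏_{S(X)} ℝ` whose
`(φ, a, b)`-coordinate is `(1/(b-a)) ∫_a^b φ(α t) dt`. -/
noncomputable def eHM {X : Type u} [TopologicalSpace X] (α : ℝ → X) : SIdx X → ℝ :=
  fun s => (1 / (s.b - s.a)) * ∫ t in s.a..s.b, s.φ (α t)

/-- `H(X)` as a subset of `∏_{S(X)} ℝ`: the closure of the image under `e_X`
of the set of step functions. -/
def HSet (X : Type u) [TopologicalSpace X] : Set (SIdx X → ℝ) :=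
  closure (eHM '' {α : ℝ → X | IsStep α})

/-- `H(X)` as a topological space (subspace of the product `∏_{S(X)} ℝ`). -/
abbrev HSp (X : Type u) [TopologicalSpace X] : Type u := ↥(HSet X)

/-- `H_X(A)`: the closure of the image under `e_X` of the step functions taking
values in `A` on `[0,1)`. -/
def HSetOn (X : Type u) [TopologicalSpace X] (A : Set X) : Set (SIdx X → ℝ) :=
  closure (eHM '' {α : ℝ → X | IsStep α ∧ ∀ t ∈ Set.Ico (0:ℝ) 1, α t ∈ A})

/-- The support of `ν`: the intersection of all closed `A ⊆ X` with `ν ∈ H_X(A)`. -/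
def suppH {X : Type u} [TopologicalSpace X] (ν : SIdx X → ℝ) : Set X :=
  ⋂₀ {A : Set X | IsClosed A ∧ ν ∈ HSetOn X A}

/-- The reindexing map `R_f : ∏_{S(X)} ℝ → ∏_{S(Y)} ℝ`, `R_f x (ψ,a,b) = x (ψ∘f,a,b)`. -/
def reindex {X : Type u} {Y : Type v} [TopologicalSpace X] [TopologicalSpace Y]
    (f : C(X, Y)) : (SIdx X → ℝ) → (SIdx Y → ℝ) :=
  fun x s => x ⟨s.φ.comp f, s.a, s.b, s.ha, s.hab, s.hb⟩

lemma isStep_comp {X : Type u} {Y : Type v} (f : X → Y) {α : ℝ → X} (h : IsStep α) :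
    IsStep (f ∘ α) := by
  obtain ⟨k, t, hk, h0, h1, hm, hc⟩ := h
  exact ⟨k, t, hk, h0, h1, hm, fun j hj s hs => congrArg f (hc j hj s hs)⟩

lemma isStep_const {X : Type u} (x : X) : IsStep (fun _ : ℝ => x) :=
  ⟨1, fun j => (j : ℝ), le_refl 1, by simp, by simp,
    fun j _ => by simp, fun _ _ _ _ => rfl⟩

/-- The point `e_X(α)` of `H(X)`, for a step function `α`. -/
noncomputable def toH {X : Type u} [TopologicalSpace X] (α : ℝ → X) (h : IsStep α) : HSp X :=
  ⟨eHM α, subset_closure ⟨α, h, rfl⟩⟩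

lemma continuous_reindex {X : Type u} {Y : Type v} [TopologicalSpace X] [TopologicalSpace Y]
    (f : C(X, Y)) : Continuous (reindex f) :=
  continuous_pi fun _ => continuous_apply _

lemma reindex_mapsTo {X : Type u} {Y : Type v} [TopologicalSpace X] [TopologicalSpace Y]
    (f : C(X, Y)) : Set.MapsTo (reindex f) (HSet X) (HSet Y) := by
  intro x hx
  have h2 := image_closure_subset_closure_image (s := eHM '' {α : ℝ → X | IsStep α})
    (continuous_reindex f)
  have h3 : reindex f '' (eHM '' {α : ℝ → X | IsStep α}) ⊆ eHM '' {α : ℝ → Y | IsStep α} := by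
    rintro _ ⟨_, ⟨α, hα, rfl⟩, rfl⟩
    exact ⟨f ∘ α, isStep_comp f hα, rfl⟩
  exact closure_mono h3 (h2 ⟨x, hx, rfl⟩)

/-- The map `H(f) : H(X) → H(Y)` induced by a continuous `f : X → Y`, i.e. the
restriction of the reindexing map `R_f`. -/
noncomputable def Hmap {X : Type u} {Y : Type v} [TopologicalSpace X] [TopologicalSpace Y]
    (f : C(X, Y)) : C(HSp X, HSp Y) where
  toFun x := ⟨reindex f x.1, reindex_mapsTo f x.2⟩
  continuous_toFun :=
    Continuous.subtype_mk ((continuous_reindex f).comp continuous_subtype_val) _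

/-- The unit `η_X : X → H(X)`, `x ↦ e_X(const x)`. -/
noncomputable def etaMap (X : Type u) [TopologicalSpace X] : C(X, HSp X) where
  toFun x := toH (fun _ : ℝ => x) (isStep_const x)
  continuous_toFun := by
    refine Continuous.subtype_mk (continuous_pi fun s => ?_) _
    simp only [eHM, intervalIntegral.integral_const]
    exact continuous_const.mul ((s.φ.continuous).const_smul (s.b - s.a))
/-- The index (0-based) of the subinterval `[i/n, (i+1)/n)` of `[0,1)` containing `s`
(as a natural number, clipped to `n - 1`). -/
noncomputable def stepIdxNat (n : ℕ) (s : ℝ) : ℕ := min ⌊s * n⌋₊ (n - 1)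

lemma stepIdxNat_eq {n j : ℕ} (hj : j < n) {s : ℝ}
    (h1 : (j : ℝ) / n ≤ s) (h2 : s < ((j : ℝ) + 1) / n) : stepIdxNat n s = j := by
  have hn : (0:ℝ) < n := by
    have : 0 < n := by omega
    exact_mod_cast this
  have h1' : (j : ℝ) ≤ s * n := by rw [div_le_iff₀ hn] at h1; exact h1
  have h2' : s * n < (j : ℝ) + 1 := by rw [lt_div_iff₀ hn] at h2; exact h2
  have hfl : ⌊s * n⌋₊ = j := by
    rw [Nat.floor_eq_iff (le_trans (Nat.cast_nonneg j) h1')]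
    exact ⟨h1', h2'⟩
  unfold stepIdxNat
  omega

lemma isStep_stepIdxNat (n : ℕ) : IsStep (stepIdxNat n) := by
  rcases Nat.eq_zero_or_pos n with rfl | hn
  · exact ⟨1, fun j => (j : ℝ), le_refl 1, by simp, by simp, fun j _ => by simp,
      fun j hj s hs => by simp [stepIdxNat]⟩
  · have hnR : (0:ℝ) < n := by exact_mod_cast hn
    refine ⟨n, fun j => (j : ℝ) / n, hn, by simp, by field_simp,
      fun j hj => ?_, fun j hj s hs => ?_⟩
    · exact (div_lt_div_iff_of_pos_right hnR).mpr (by push_cast; linarith)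
    · obtain ⟨hs1, hs2⟩ := hs
      have hs2' : s < ((j : ℝ) + 1) / n := by
        exact_mod_cast hs2
      rw [stepIdxNat_eq hj hs1 hs2',
        stepIdxNat_eq hj (le_refl _) ((div_lt_div_iff_of_pos_right hnR).mpr (by linarith))]
/-- The step function `β : [0,1) → K_n`, `β(s) = i` for `s ∈ [i/n, (i+1)/n)`,
with `K_n` realized as `Fin n` (0-based indexing). -/
noncomputable def stepIdx (n : ℕ) [NeZero n] (s : ℝ) : Fin n :=
  ⟨stepIdxNat n s, by
    have := NeZero.ne n
    unfold stepIdxNat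
    omega⟩

lemma isStep_stepIdx (n : ℕ) [NeZero n] : IsStep (stepIdx n) := by
  have hn := NeZero.ne n
  have h : stepIdx n =
      (fun m : ℕ => (⟨min m (n - 1), by omega⟩ : Fin n)) ∘ stepIdxNat n := by
    funext s
    apply Fin.ext
    simp [stepIdx, stepIdxNat, min_assoc]
  rw [h]
  exact isStep_comp _ (isStep_stepIdxNat n)

/-- The diagonal step function `α : [0,1) → K_n × K_n`, `α(s) = (i,i)` for
`s ∈ [i/n, (i+1)/n)`. -/
noncomputable def alphaDiag (n : ℕ) [NeZero n] : ℝ → Fin n × Fin n :=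
  fun s => (stepIdx n s, stepIdx n s)

lemma isStep_alphaDiag (n : ℕ) [NeZero n] : IsStep (alphaDiag n) :=
  isStep_comp (fun i : Fin n => (i, i)) (isStep_stepIdx n)

/-- The step function `α_i : [0,1) → K_n × K_n`, `α_i(s) = (i,j)` for
`s ∈ [j/n, (j+1)/n)`. -/
noncomputable def alphaRow (n : ℕ) [NeZero n] (i : Fin n) : ℝ → Fin n × Fin n :=
  fun s => (i, stepIdx n s)

lemma isStep_alphaRow (n : ℕ) [NeZero n] (i : Fin n) : IsStep (alphaRow n i) :=
  isStep_comp (fun j : Fin n => (i, j)) (isStep_stepIdx n)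

/-- The step function `A_n : [0,1) → H(K_n × K_n)`, `A_n(s) = e(α_i)` for
`s ∈ [i/n, (i+1)/n)`. -/
noncomputable def An (n : ℕ) [NeZero n] : ℝ → HSp (Fin n × Fin n) :=
  fun s => toH (alphaRow n (stepIdx n s)) (isStep_alphaRow n _)

lemma isStep_An (n : ℕ) [NeZero n] : IsStep (An n) :=
  isStep_comp (fun i : Fin n => toH (alphaRow n i) (isStep_alphaRow n i)) (isStep_stepIdx n)

/-- The step function `γ_i^{(n)} : [0,1) → D = {0,1}` which is `1` on
`[i/n, (i+1)/n)` and `0` elsewhere, with `D` realized as `Bool`. -/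
noncomputable def gammaStep (n i : ℕ) : ℝ → Bool := fun s => decide (stepIdxNat n s = i)

lemma isStep_gammaStep (n i : ℕ) : IsStep (gammaStep n i) :=
  isStep_comp (fun m : ℕ => decide (m = i)) (isStep_stepIdxNat n)

/-- The step function `B_n : [0,1) → H(D)`, `B_n(s) = e(γ_i^{(n)})` for
`s ∈ [i/n, (i+1)/n)`. -/
noncomputable def Bn (n : ℕ) : ℝ → HSp Bool :=
  fun s => toH (gammaStep n (stepIdxNat n s)) (isStep_gammaStep n _)

lemma isStep_Bn (n : ℕ) : IsStep (Bn n) :=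
  isStep_comp (fun m : ℕ => toH (gammaStep n m) (isStep_gammaStep n m)) (isStep_stepIdxNat n)

section Naturality

variable {X : Type u} {Y : Type v} [TopologicalSpace X] [TopologicalSpace Y]

theorem Hmap_toH (f : C(X, Y)) {α : ℝ → X} (hα : IsStep α) :
    Hmap f (toH α hα) = toH (f ∘ α) (isStep_comp f hα) :=
  rfl

theorem etaMap_eq_toH (x : X) : etaMap X x = toH (fun _ => x) (isStep_const x) :=
  rfl

theorem toH_congr {α α' : ℝ → X} (hα : IsStep α) (hα' : IsStep α') (h : α = α') :
    toH α hα = toH α' hα' := by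
  subst h
  rfl

end Naturality

section An

variable (n : ℕ) [NeZero n]

theorem fst_comp_alphaRow (i : Fin n) : Prod.fst ∘ alphaRow n i = fun _ => i :=
  rfl

theorem snd_comp_alphaRow (i : Fin n) : Prod.snd ∘ alphaRow n i = stepIdx n :=
  rfl

theorem Hmap_fst_comp_An :
    Hmap ⟨Prod.fst, continuous_fst⟩ ∘ An n = etaMap (Fin n) ∘ stepIdx n := by
  funext t
  exact (Hmap_toH _ _).trans (toH_congr _ (isStep_const _) (fst_comp_alphaRow n _))

theorem Hmap_snd_comp_An :
    Hmap ⟨Prod.snd, continuous_snd⟩ ∘ An n = fun _ => toH (stepIdx n) (isStep_stepIdx n) := by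
  funext t
  exact (Hmap_toH _ _).trans (toH_congr _ _ (snd_comp_alphaRow n _))

end An

/-- `H(H(pr_1))(𝒜_n) = H(η_{K_n})(e(β))` and `H(H(pr_2))(𝒜_n) = η_{H(K_n)}(e(β))`. -/
theorem HHpr_An (n : ℕ) [NeZero n] :
    Hmap (Hmap (⟨Prod.fst, continuous_fst⟩ : C(Fin n × Fin n, Fin n)))
        (toH (An n) (isStep_An n)) =
      Hmap (etaMap (Fin n)) (toH (stepIdx n) (isStep_stepIdx n)) ∧
    Hmap (Hmap (⟨Prod.snd, continuous_snd⟩ : C(Fin n × Fin n, Fin n)))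
        (toH (An n) (isStep_An n)) =
      etaMap (HSp (Fin n)) (toH (stepIdx n) (isStep_stepIdx n)) := by
  constructor
  · rw [Hmap_toH, Hmap_toH]
    exact toH_congr _ _ (Hmap_fst_comp_An n)
  · rw [Hmap_toH, etaMap_eq_toH]
    exact toH_congr _ _ (Hmap_snd_comp_An n)
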